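/- For every 2×2 complex matrix M: tr([M, B₁]R) + tr(M B₁) = tr(B₁) · tr(MR). -/

import Mathlib

/-!
Since `det B₁ = 0`, the adjugate `adj B₁ = tr B₁ • 1 - B₁` annihilates `B₁` from both sides.
Because `R = B₁ X` for an explicit `X`, this gives `B₁ R = tr B₁ • R`; because `1 - R = Y adj B₁`
for an explicit `Y` (using `δ = b₁d₂ − d₁b₂ ≠ 0`), it gives `R B₁ = B₁`. Hence
`tr(M B₁ R) = tr B₁ · tr(M R)` and, cyclically, `tr(B₁ M R) = tr(M R B₁) = tr(M B₁)`.
-/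

noncomputable section

/-- The rank-one matrix `R = (−1/(b₁d₂ − d₁b₂)) · (b₁, d₁)ᵀ · (−d₂, b₂)`
built from the second columns `(b, d)` of `B₁` and `B₂`
(here `b_k = (B_k)₁₂`, `d_k = (B_k)₂₂`). -/
def Rmat (B₁ B₂ : Matrix (Fin 2) (Fin 2) ℂ) : Matrix (Fin 2) (Fin 2) ℂ :=
  (-(B₁ 0 1 * B₂ 1 1 - B₁ 1 1 * B₂ 0 1)⁻¹) •
    Matrix.vecMulVec ![B₁ 0 1, B₁ 1 1] ![-(B₂ 1 1), B₂ 0 1]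

open Matrix

theorem Matrix.adjugate_fin_two_eq_trace_smul_one_sub {α : Type*} [CommRing α]
    (A : Matrix (Fin 2) (Fin 2) α) : A.adjugate = A.trace • 1 - A := by
  ext i j
  fin_cases i <;> fin_cases j <;> simp [adjugate_fin_two, trace_fin_two]

theorem Rmat_eq_mul (B₁ B₂ : Matrix (Fin 2) (Fin 2) ℂ) :
    Rmat B₁ B₂ = B₁ * ((-(B₁ 0 1 * B₂ 1 1 - B₁ 1 1 * B₂ 0 1)⁻¹) • !![0, 0; -B₂ 1 1, B₂ 0 1]) := by
  ext i j
  fin_cases i <;> fin_cases j <;> simp [Rmat, mul_apply, Fin.sum_univ_two] <;> ring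

theorem one_sub_Rmat_eq_mul_adjugate {B₁ B₂ : Matrix (Fin 2) (Fin 2) ℂ}
    (hden : B₁ 0 1 * B₂ 1 1 - B₁ 1 1 * B₂ 0 1 ≠ 0) :
    1 - Rmat B₁ B₂ =
      ((-(B₁ 0 1 * B₂ 1 1 - B₁ 1 1 * B₂ 0 1)⁻¹) • !![B₂ 0 1, 0; B₂ 1 1, 0]) * B₁.adjugate := by
  ext i j
  fin_cases i <;> fin_cases j <;>
    simp [Rmat, mul_apply, Fin.sum_univ_two, adjugate_fin_two] <;>
    field_simp <;> ring

theorem Rmat_mul_of_det_eq_zero {B₁ B₂ : Matrix (Fin 2) (Fin 2) ℂ} (h₁ : B₁.det = 0)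
    (hden : B₁ 0 1 * B₂ 1 1 - B₁ 1 1 * B₂ 0 1 ≠ 0) : Rmat B₁ B₂ * B₁ = B₁ := by
  have h : (1 - Rmat B₁ B₂) * B₁ = 0 := by
    rw [one_sub_Rmat_eq_mul_adjugate hden, mul_assoc, adjugate_mul, h₁, zero_smul, mul_zero]
  rwa [sub_mul, one_mul, sub_eq_zero, eq_comm] at h

theorem mul_Rmat_of_det_eq_zero {B₁ : Matrix (Fin 2) (Fin 2) ℂ} (B₂ : Matrix (Fin 2) (Fin 2) ℂ)
    (h₁ : B₁.det = 0) : B₁ * Rmat B₁ B₂ = B₁.trace • Rmat B₁ B₂ := by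
  have h : B₁.adjugate * Rmat B₁ B₂ = 0 := by
    rw [Rmat_eq_mul, ← mul_assoc, adjugate_mul, h₁, zero_smul, zero_mul]
  rwa [adjugate_fin_two_eq_trace_smul_one_sub, sub_mul, smul_mul_assoc, one_mul, sub_eq_zero,
    eq_comm] at h

theorem trace_comm_B1_R (B₁ B₂ : Matrix (Fin 2) (Fin 2) ℂ)
    (h₁ : B₁.det = 0)
    (hden : B₁ 0 1 * B₂ 1 1 - B₁ 1 1 * B₂ 0 1 ≠ 0)
    (M : Matrix (Fin 2) (Fin 2) ℂ) :
    ((M * B₁ - B₁ * M) * Rmat B₁ B₂).trace + (M * B₁).trace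
      = B₁.trace * (M * Rmat B₁ B₂).trace := by
  have hMBR : (M * B₁ * Rmat B₁ B₂).trace = B₁.trace * (M * Rmat B₁ B₂).trace := by
    rw [mul_assoc, mul_Rmat_of_det_eq_zero B₂ h₁, Matrix.mul_smul, trace_smul, smul_eq_mul]
  have hBMR : (B₁ * M * Rmat B₁ B₂).trace = (M * B₁).trace := by
    rw [trace_mul_cycle, Rmat_mul_of_det_eq_zero h₁ hden, trace_mul_comm]
  rw [sub_mul, trace_sub, hMBR, hBMR, sub_add_cancel]
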